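/- arXiv:2308.13010 — 5 statements merged into one kernel-verified Lean document; each statement's English description precedes it below -/
import Mathlib

section
/- In a median graph, for any two vertices x and y, the cone at y away from x (the set of vertices z such that y lies on a geodesic between x and z) is convex, i.e., every vertex on a geodesic between two points of the cone lies in the cone. -/
open SimpleGraph

variable {X : Type*}

/-- The geodesic interval between `x` and `y`. -/
def interval (G : SimpleGraph X) (x y : X) : Set X :=
  {z | G.dist x z + G.dist z y = G.dist x y}

/-- A set is convex if it contains all geodesics between its points. -/
def IsConvexSet (G : SimpleGraph X) (A : Set X) : Prop :=
  ∀ x ∈ A, ∀ y ∈ A, interval G x y ⊆ A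

/-- A median graph: connected, and every triple has a unique median. -/
def IsMedianGraph (G : SimpleGraph X) : Prop :=
  G.Connected ∧ ∀ x y z : X, ∃! m : X,
    m ∈ interval G x y ∧ m ∈ interval G y z ∧ m ∈ interval G z x

/-- The cone at `y` away from `x`. -/
def cone (G : SimpleGraph X) (x y : X) : Set X :=
  {z | y ∈ interval G x z}

/-- A half-space: a convex set with convex complement. -/
def IsHalfspace (G : SimpleGraph X) (H : Set X) : Prop :=
  IsConvexSet G H ∧ IsConvexSet G Hᶜ

/-- Convex hull. -/
def convexHullG (G : SimpleGraph X) (A : Set X) : Set X :=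
  ⋂₀ {B : Set X | IsConvexSet G B ∧ A ⊆ B}

/-- Inward edge boundary of a set. -/
def edgeBoundaryIn (G : SimpleGraph X) (H : Set X) : Set (X × X) :=
  {e | G.Adj e.1 e.2 ∧ e.1 ∉ H ∧ e.2 ∈ H}

/-- Two sets are nested if one of the four corners is empty. -/
def Nested (A B : Set X) : Prop :=
  A ∩ B = ∅ ∨ A ∩ Bᶜ = ∅ ∨ Aᶜ ∩ B = ∅ ∨ Aᶜ ∩ Bᶜ = ∅

open Classical in
noncomputable def medianOf (G : SimpleGraph X) (x y z : X) : X :=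
  if h : ∃! m : X, m ∈ interval G x y ∧ m ∈ interval G y z ∧ m ∈ interval G z x
  then h.choose else x

open Classical in
noncomputable def projOn (G : SimpleGraph X) (A : Set X) (x : X) : X :=
  if h : ∃ p, p ∈ A ∧ ∀ a ∈ A, p ∈ interval G x a then h.choose else x


/-- Edges crossing out of a set. -/
def crossEdges (G : SimpleGraph X) (A : Set X) : Set (X × X) :=
  {e | G.Adj e.1 e.2 ∧ e.1 ∈ A ∧ e.2 ∉ A}

/-- Total vertex boundary of a set. -/
def vBoundary (G : SimpleGraph X) (A : Set X) : Set X :=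
  {x | ∃ y, G.Adj x y ∧ ((x ∈ A ∧ y ∉ A) ∨ (x ∉ A ∧ y ∈ A))}

/-- Two sets are non-nested if all four corners are nonempty. -/
def NonNested (A B : Set X) : Prop :=
  (A ∩ B).Nonempty ∧ (A ∩ Bᶜ).Nonempty ∧ (Aᶜ ∩ B).Nonempty ∧ (Aᶜ ∩ Bᶜ).Nonempty

/-- `H` is a successor of `K`: both are half-spaces, `K ⊊ H`, with no half-space
strictly in between. -/
def Successor (G : SimpleGraph X) (H K : Set X) : Prop :=
  IsHalfspace G H ∧ IsHalfspace G K ∧ K ⊂ H ∧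
    ¬ ∃ L : Set X, IsHalfspace G L ∧ K ⊂ L ∧ L ⊂ H

/-- Adjacency of the hyperplanes of half-spaces `H`, `K`. -/
def HypAdj (G : SimpleGraph X) (H K : Set X) : Prop :=
  H = K ∨ H = Kᶜ ∨ NonNested H K ∨
  Successor G H K ∨ Successor G K H ∨
  Successor G Hᶜ K ∨ Successor G K Hᶜ ∨
  Successor G H Kᶜ ∨ Successor G Kᶜ H ∨
  Successor G Hᶜ Kᶜ ∨ Successor G Kᶜ Hᶜ

/-- The Hamming cube on `{0,1}^n`: strings adjacent iff they differ in exactly one bit. -/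
def hammingCube (n : ℕ) : SimpleGraph (Fin n → Bool) :=
  SimpleGraph.fromRel (fun a b => ∃! i : Fin n, a i ≠ b i)

/-- Oriented edges `e`, `f` are parallel sides of a square (4-cycle). -/
def SquareParallel (G : SimpleGraph X) (e f : X × X) : Prop :=
  G.Adj e.1 e.2 ∧ G.Adj f.1 f.2 ∧ G.Adj e.1 f.1 ∧ G.Adj e.2 f.2 ∧ e.1 ≠ f.2 ∧ e.2 ≠ f.1


private lemma tri' (G : SimpleGraph X) (hc : G.Connected) (a b c : X) :
    G.dist a c ≤ G.dist a b + G.dist b c :=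
  hc.dist_triangle

theorem cone_isConvex (G : SimpleGraph X) (hG : IsMedianGraph G) (x y : X) :
    IsConvexSet G (cone G x y) := by
  obtain ⟨hc, hmed⟩ := hG
  -- helper facts as local lemmas
  have chain : ∀ x y s w : X, G.dist x y + G.dist y s = G.dist x s →
      G.dist x s + G.dist s w = G.dist x w → G.dist x y + G.dist y w = G.dist x w := by
    intro x y s w h1 h2
    have t1 := tri' G hc x y w
    have t2 := tri' G hc y s w
    have t3 := tri' G hc x s w
    omega
  have tail : ∀ u q r v : X, G.dist u q + G.dist q v = G.dist u v →
      G.dist q r + G.dist r v = G.dist q v → G.dist u r + G.dist r v = G.dist u v := by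
    intro u q r v h1 h2
    have t1 := tri' G hc u r v
    have t2 := tri' G hc u q r
    omega
  have split : ∀ x y s u : X, G.dist x y + G.dist y u = G.dist x u →
      G.dist y s + G.dist s u = G.dist y u →
      G.dist x s + G.dist s u = G.dist x u ∧ G.dist x y + G.dist y s = G.dist x s := by
    intro x y s u h1 h2
    have t1 := tri' G hc x s u
    have t2 := tri' G hc x y s
    constructor <;> omega
  have dc : ∀ u v : X, G.dist u v = G.dist v u := fun u v => SimpleGraph.dist_comm
  intro a ha b hb z hz
  simp only [cone, interval, Set.mem_setOf_eq] at ha hb hz ⊢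
  -- ha : d x y + d y a = d x a;  hb : d x y + d y b = d x b;  hz : d a z + d z b = d a b
  -- Step 1: the median p of (x,a,b)
  obtain ⟨p, ⟨hp1, hp2, hp3⟩, hpu⟩ := hmed x a b
  -- Step C: y ∈ [x,p], via s = med(y,a,b)
  obtain ⟨s, ⟨hs1, hs2, hs3⟩, _⟩ := hmed y a b
  simp only [interval, Set.mem_setOf_eq] at hp1 hp2 hp3 hs1 hs2 hs3
  -- s ∈ [x,a] and y ∈ [x,s]
  obtain ⟨hsxa, hyxs⟩ := split x y s a ha hs1
  -- s ∈ [x,b]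
  have hsyb : G.dist y s + G.dist s b = G.dist y b := by
    have h1 := dc b s; have h2 := dc b y; have h3 := dc s y; omega
  obtain ⟨hsxb, _⟩ := split x y s b hb hsyb
  -- s is a median of (x,a,b), so s = p
  have hsp : s = p := by
    apply hpu
    refine ⟨?_, ?_, ?_⟩ <;> simp only [interval, Set.mem_setOf_eq]
    · exact hsxa
    · exact hs2
    · have h1 := dc b s; have h2 := dc b x; have h3 := dc s x; have h4 := dc s b; have h5 := dc x b
      omega
  have hyxp : G.dist x y + G.dist y p = G.dist x p := hsp ▸ hyxs
  -- Step B: p ∈ [x,z], via q = med(x,z,a) and r = med(x,q,b)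
  obtain ⟨q, ⟨hq1, hq2, hq3⟩, _⟩ := hmed x z a
  simp only [interval, Set.mem_setOf_eq] at hq1 hq2 hq3
  -- q ∈ [a,z]
  have hqaz : G.dist a q + G.dist q z = G.dist a z := by
    have h1 := dc a q; have h2 := dc z q; have h3 := dc z a; have h4 := dc q z; omega
  -- q ∈ [a,b] since z ∈ [a,b]
  have hqab : G.dist a q + G.dist q b = G.dist a b := by
    have h1 : G.dist a q + G.dist q z = G.dist a z := hqaz
    have t1 := tri' G hc a q b
    have t2 := tri' G hc q z b
    omega
  -- q ∈ [x,a]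
  have hqxa : G.dist x q + G.dist q a = G.dist x a := by
    have h1 := dc a q; have h2 := dc a x; have h3 := dc q x; have h4 := dc q a; omega
  obtain ⟨r, ⟨hr1, hr2, hr3⟩, _⟩ := hmed x q b
  simp only [interval, Set.mem_setOf_eq] at hr1 hr2 hr3
  -- r ∈ [x,z]
  have hrxz : G.dist x r + G.dist r z = G.dist x z := by
    have h2 : G.dist x r + G.dist r q = G.dist x q := by
      have t1 := tri' G hc x r q
      have t2 := tri' G hc r q z
      omega
    have t1 := tri' G hc x r z
    have t2 := tri' G hc r q z
    omega
  -- r ∈ [x,q] hence r ∈ [x,a]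
  have hrxq : G.dist x r + G.dist r q = G.dist x q := by
    have t1 := tri' G hc x r q
    omega
  have hrxa : G.dist x r + G.dist r a = G.dist x a := chain x r q a hrxq hqxa
  -- r ∈ [a,b] : from q ∈ [a,b] and r ∈ [q,b]
  have hrab : G.dist a r + G.dist r b = G.dist a b := tail a q r b hqab hr2
  -- r is a median of (x,a,b), so r = p
  have hrp : r = p := by
    apply hpu
    refine ⟨?_, ?_, ?_⟩ <;> simp only [interval, Set.mem_setOf_eq]
    · exact hrxa
    · exact hrab
    · have h1 := dc b r; have h2 := dc b x; have h3 := dc r x; have h4 := dc r b; have h5 := dc x b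
      omega
  have hpxz : G.dist x p + G.dist p z = G.dist x z := hrp ▸ hrxz
  exact chain x y p z hyxp hpxz
end

section
/- In a median graph, for any nonempty set A and any vertex x, there is a unique point in the convex hull of A which lies on a geodesic between x and every point of A (the projection of x toward A); moreover this point also lies between x and every point of the convex hull of A. -/
open SimpleGraph

variable {X : Type*}

section AuxMedian

variable {G : SimpleGraph X}

private lemma dcomm (G : SimpleGraph X) (u v : X) : G.dist u v = G.dist v u :=
  SimpleGraph.dist_comm

private lemma interval_comm {x y z : X} (h : z ∈ interval G x y) : z ∈ interval G y x := by
  simp only [interval, Set.mem_setOf_eq] at h ⊢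
  have c1 := dcomm G y z
  have c2 := dcomm G z x
  have c3 := dcomm G y x
  have c4 := dcomm G x z
  omega

private lemma betw_trans (hc : G.Connected) {u v z q : X}
    (hz : z ∈ interval G u v) (hq : q ∈ interval G u z) : q ∈ interval G u v := by
  simp only [interval, Set.mem_setOf_eq] at hz hq ⊢
  have t1 : G.dist q v ≤ G.dist q z + G.dist z v := hc.dist_triangle
  have t2 : G.dist u v ≤ G.dist u q + G.dist q v := hc.dist_triangle
  omega

/-- The median of `(u,v,c)` is a gate: it is between `c` and every point of `I(u,v)`. -/
private lemma median_gate (hG : IsMedianGraph G) (u v c : X) :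
    ∃ t : X, (t ∈ interval G u v ∧ t ∈ interval G v c ∧ t ∈ interval G c u) ∧
      ∀ z ∈ interval G u v, t ∈ interval G c z := by
  have hc := hG.1
  obtain ⟨t, ht, huniq⟩ := hG.2 u v c
  refine ⟨t, ht, ?_⟩
  have key : ∀ n : ℕ, ∀ z : X, G.dist c z = n → z ∈ interval G u v → t ∈ interval G c z := by
    intro n
    induction n using Nat.strong_induction_on with
    | _ n ih =>
      intro z hn hz
      obtain ⟨q, ⟨hq1, hq2, hq3⟩, _⟩ := hG.2 c z v
      by_cases hqz : q = z
      · obtain ⟨p, ⟨hp1, hp2, hp3⟩, _⟩ := hG.2 c z u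
        by_cases hpz : p = z
        · have hzt : z = t := by
            refine huniq z ⟨hz, ?_, ?_⟩
            · rw [← hqz]; exact hq3
            · rw [hpz] at hp3; exact interval_comm hp3
          subst hzt
          simp only [interval, Set.mem_setOf_eq, SimpleGraph.dist_self]
          omega
        · -- recurse through p
          have hpuv : p ∈ interval G u v := betw_trans hc hz (interval_comm hp2)
          have hppos : 0 < G.dist p z := hc.pos_dist_of_ne hpz
          have hdp : G.dist c p < n := by
            simp only [interval, Set.mem_setOf_eq] at hp1
            omega
          have hrec := ih _ hdp p rfl hpuv
          simp only [interval, Set.mem_setOf_eq] at hrec hp1 ⊢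
          have t1 : G.dist t z ≤ G.dist t p + G.dist p z := hc.dist_triangle
          have t2 : G.dist c z ≤ G.dist c t + G.dist t z := hc.dist_triangle
          omega
      · -- recurse through q
        have hquv : q ∈ interval G u v :=
          interval_comm (betw_trans hc (interval_comm hz) (interval_comm hq2))
        have hqpos : 0 < G.dist q z := hc.pos_dist_of_ne hqz
        have hdq : G.dist c q < n := by
          simp only [interval, Set.mem_setOf_eq] at hq1
          omega
        have hrec := ih _ hdq q rfl hquv
        simp only [interval, Set.mem_setOf_eq] at hrec hq1 ⊢
        have t1 : G.dist t z ≤ G.dist t q + G.dist q z := hc.dist_triangle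
        have t2 : G.dist c z ≤ G.dist c t + G.dist t z := hc.dist_triangle
        omega
  intro z hz
  exact key _ z rfl hz

/-- Half-spaces determined by an edge are convex in a median graph. -/
private lemma halfspace_convex (hG : IsMedianGraph G) {a b : X} (hab : G.Adj a b) :
    IsConvexSet G {z | G.dist a z < G.dist b z} := by
  have hc := hG.1
  intro u hu v hv w hw
  simp only [Set.mem_setOf_eq] at hu hv ⊢
  by_contra hcon
  push_neg at hcon
  obtain ⟨s, ⟨hs1, hs2, hs3⟩, hsg⟩ := median_gate hG u v a
  obtain ⟨t, ⟨ht1, ht2, ht3⟩, htg⟩ := median_gate hG u v b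
  have gws := htg s hs1
  have gww := htg w hw
  have hab1 : G.dist a b = 1 := dist_eq_one_iff_adj.mpr hab
  have tri1 : G.dist b s ≤ G.dist b a + G.dist a s := hc.dist_triangle
  have tri2 : G.dist a w ≤ G.dist a t + G.dist t w := hc.dist_triangle
  have tri3 : G.dist a t ≤ G.dist a s + G.dist s t := hc.dist_triangle
  simp only [interval, Set.mem_setOf_eq] at hs1 hs2 hs3 ht1 ht2 ht3 gws gww
  have c1 := dcomm G s a
  have c2 := dcomm G v s
  have c3 := dcomm G s u
  have c4 := dcomm G v a
  have c5 := dcomm G t b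
  have c6 := dcomm G v t
  have c7 := dcomm G t u
  have c8 := dcomm G v b
  have c9 := dcomm G b a
  have c10 := dcomm G t s
  have c11 := dcomm G u s
  have c12 := dcomm G u t
  omega

/-- Every nonempty convex set in a median graph is gated. -/
private lemma exists_gate (hG : IsMedianGraph G) {C : Set X} (hCc : IsConvexSet G C)
    (hne : C.Nonempty) (x : X) : ∃ p ∈ C, ∀ c ∈ C, p ∈ interval G x c := by
  have hc := hG.1
  set S : Set ℕ := {n | ∃ c ∈ C, G.dist x c = n} with hS
  have hSne : S.Nonempty := ⟨G.dist x hne.choose, hne.choose, hne.choose_spec, rfl⟩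
  obtain ⟨p, hpC, hpd⟩ := Nat.sInf_mem hSne
  refine ⟨p, hpC, fun d hd => ?_⟩
  obtain ⟨m, ⟨hm1, hm2, hm3⟩, _⟩ := hG.2 x p d
  have hmC : m ∈ C := hCc p hpC d hd hm2
  have hmin : sInf S ≤ G.dist x m := Nat.sInf_le ⟨m, hmC, rfl⟩
  have hmp : m = p := by
    have h0 : G.dist m p = 0 := by
      simp only [interval, Set.mem_setOf_eq] at hm1
      omega
    exact hc.dist_eq_zero_iff.mp h0
  rw [← hmp]
  exact interval_comm hm3

/-- A neighbor step towards another vertex. -/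
private lemma exists_adj_step (hc : G.Connected) {p q : X} (hne : p ≠ q) :
    ∃ y : X, G.Adj p y ∧ G.dist y q + 1 = G.dist p q := by
  obtain ⟨w, hw⟩ := (hc p q).exists_walk_length_eq_dist
  cases w with
  | nil => exact absurd rfl hne
  | @cons _ y _ h w' =>
    refine ⟨y, h, ?_⟩
    rw [SimpleGraph.Walk.length_cons] at hw
    have h1 : G.dist y q ≤ w'.length := SimpleGraph.dist_le w'
    have h2 : G.dist p q ≤ G.dist p y + G.dist y q := hc.dist_triangle
    have h3 : G.dist p y = 1 := dist_eq_one_iff_adj.mpr h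
    omega

end AuxMedian

theorem projection_exists_unique (G : SimpleGraph X) (hG : IsMedianGraph G)
    (A : Set X) (hA : A.Nonempty) (x : X) :
    (∃! p : X, p ∈ convexHullG G A ∧ ∀ a ∈ A, p ∈ interval G x a) ∧
    (∀ p : X, p ∈ convexHullG G A → (∀ a ∈ A, p ∈ interval G x a) →
      ∀ b ∈ convexHullG G A, p ∈ interval G x b) := by
  have hc := hG.1
  have hCconv : IsConvexSet G (convexHullG G A) := by
    intro u hu v hv w hw
    intro B hB
    exact hB.1 u (hu B hB) v (hv B hB) hw
  have hsub : A ⊆ convexHullG G A := fun a ha => Set.mem_sInter.mpr (fun B hB => hB.2 ha)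
  have hCne : (convexHullG G A).Nonempty := ⟨hA.choose, hsub hA.choose_spec⟩
  obtain ⟨p₀, hp₀C, hp₀g⟩ := exists_gate hG hCconv hCne x
  have key : ∀ p, p ∈ convexHullG G A → (∀ a ∈ A, p ∈ interval G x a) → p = p₀ := by
    intro p hpC hpI
    by_contra hne
    obtain ⟨y, hadj, hyd⟩ := exists_adj_step hc (show p₀ ≠ p from fun h => hne h.symm)
    have hy1 : G.dist p₀ y = 1 := dist_eq_one_iff_adj.mpr hadj
    have hyI : y ∈ interval G p₀ p := by
      simp only [interval, Set.mem_setOf_eq]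
      omega
    have hyC : y ∈ convexHullG G A := hCconv p₀ hp₀C p hpC hyI
    have hAW : A ⊆ {z | G.dist y z < G.dist p₀ z} := by
      intro a ha
      have h1 := hp₀g p hpC
      have h2 := hpI a ha
      have h3 := hp₀g a (hsub ha)
      have t1 : G.dist p₀ a ≤ G.dist p₀ p + G.dist p a := hc.dist_triangle
      have t2 : G.dist y a ≤ G.dist y p + G.dist p a := hc.dist_triangle
      simp only [interval, Set.mem_setOf_eq] at h1 h2 h3 ⊢
      have c1 := dcomm G y p
      omega
    have hCW : convexHullG G A ⊆ {z | G.dist y z < G.dist p₀ z} :=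
      Set.sInter_subset_of_mem ⟨halfspace_convex hG hadj.symm, hAW⟩
    have hfin := hCW hp₀C
    simp only [Set.mem_setOf_eq, SimpleGraph.dist_self] at hfin
    omega
  refine ⟨⟨p₀, ⟨hp₀C, fun a ha => hp₀g a (hsub ha)⟩, ?_⟩, ?_⟩
  · rintro p ⟨h1, h2⟩
    exact key p h1 h2
  · intro p h1 h2 b hb
    rw [key p h1 h2]
    exact hp₀g b hb
end

section
/- (Helly's theorem for median graphs) Any finitely many pairwise intersecting nonempty convex subsets A_0, ..., A_{n-1} of a median graph have nonempty common intersection. -/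
open SimpleGraph

variable {X : Type*}

lemma convex_inter' {G : SimpleGraph X} {A B : Set X} (hA : IsConvexSet G A)
    (hB : IsConvexSet G B) : IsConvexSet G (A ∩ B) := fun x hx y hy z hz =>
  ⟨hA x hx.1 y hy.1 hz, hB x hx.2 y hy.2 hz⟩

lemma helly3 {G : SimpleGraph X} (hG : IsMedianGraph G) {A B C : Set X}
    (hA : IsConvexSet G A) (hB : IsConvexSet G B) (hC : IsConvexSet G C)
    (hAB : (A ∩ B).Nonempty) (hBC : (B ∩ C).Nonempty) (hCA : (C ∩ A).Nonempty) :
    (A ∩ B ∩ C).Nonempty := by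
  obtain ⟨z, hzA, hzB⟩ := hAB
  obtain ⟨x, hxB, hxC⟩ := hBC
  obtain ⟨y, hyC, hyA⟩ := hCA
  obtain ⟨m, ⟨h1, h2, h3⟩, -⟩ := hG.2 x y z
  exact ⟨m, ⟨hA y hyA z hzA h2, hB z hzB x hxB h3⟩, hC x hxC y hyC h1⟩

theorem helly_median (G : SimpleGraph X) (hG : IsMedianGraph G) (n : ℕ)
    (A : Fin n → Set X) (hconv : ∀ i, IsConvexSet G (A i))
    (hne : ∀ i, (A i).Nonempty)
    (hpair : ∀ i j, (A i ∩ A j).Nonempty) :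
    (⋂ i, A i).Nonempty := by
  induction n with
  | zero =>
    obtain ⟨x⟩ := hG.1.nonempty
    exact ⟨x, Set.mem_iInter.2 (fun i => i.elim0)⟩
  | succ n ih =>
    rcases n with _ | m
    · obtain ⟨a, ha⟩ := hne 0
      exact ⟨a, Set.mem_iInter.2 (fun i => Fin.fin_one_eq_zero i ▸ ha)⟩
    · set B : Fin (m + 1) → Set X :=
        fun i => A i.castSucc ∩ A (Fin.last (m + 1)) with hB
      have hBpair : ∀ i j, (B i ∩ B j).Nonempty := by
        intro i j
        obtain ⟨a, ⟨ha1, ha2⟩, ha3⟩ := helly3 hG (hconv i.castSucc) (hconv j.castSucc)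
          (hconv (Fin.last (m + 1))) (hpair _ _) (hpair _ _) (hpair _ _)
        exact ⟨a, ⟨ha1, ha3⟩, ⟨ha2, ha3⟩⟩
      obtain ⟨a, ha⟩ := ih B (fun i => convex_inter' (hconv _) (hconv _))
        (fun i => hpair _ _) hBpair
      refine ⟨a, Set.mem_iInter.2 (fun i => ?_)⟩
      refine Fin.lastCases ?_ (fun j => ?_) i
      · exact (Set.mem_iInter.1 ha 0).2
      · exact (Set.mem_iInter.1 ha j).1
end

section
/- In a median graph, hyperplane-equivalence of edges (lying on the boundary of the same half-space) is the equivalence relation generated by being parallel sides of a 4-cycle. -/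
open SimpleGraph

variable {X : Type*}

namespace MedianSq
variable {G : SimpleGraph X} {a b u v w x y z : X}

def Wside (G : SimpleGraph X) (a b : X) : Set X := {z | G.dist z b = G.dist z a + 1}

lemma mem_Wside : z ∈ Wside G a b ↔ G.dist z b = G.dist z a + 1 := Iff.rfl

lemma mem_interval_iff : z ∈ interval G x y ↔ G.dist x z + G.dist z y = G.dist x y := Iff.rfl

lemma dist_adj (h : G.Adj x y) : G.dist x y = 1 := dist_eq_one_iff_adj.mpr h

lemma adj_of_dist_one (h : G.dist x y = 1) : G.Adj x y := dist_eq_one_iff_adj.mp h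

lemma comm' (G : SimpleGraph X) (p q : X) : G.dist p q = G.dist q p := SimpleGraph.dist_comm

lemma median_spec (hG : IsMedianGraph G) (x y z : X) :
    ∃ m, (G.dist x m + G.dist m y = G.dist x y) ∧
         (G.dist y m + G.dist m z = G.dist y z) ∧
         (G.dist z m + G.dist m x = G.dist z x) ∧
         ∀ m', (G.dist x m' + G.dist m' y = G.dist x y) →
               (G.dist y m' + G.dist m' z = G.dist y z) →
               (G.dist z m' + G.dist m' x = G.dist z x) → m' = m := by
  obtain ⟨m, ⟨h1, h2, h3⟩, hu⟩ := hG.2 x y z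
  exact ⟨m, h1, h2, h3, fun m' a1 a2 a3 => hu m' ⟨a1, a2, a3⟩⟩

lemma W_total (hG : IsMedianGraph G) (hab : G.Adj a b) (z : X) :
    z ∈ Wside G a b ∨ z ∈ Wside G b a := by
  have hc := hG.1
  obtain ⟨m, h1, h2, h3, -⟩ := median_spec hG z a b
  have hab1 : G.dist a b = 1 := dist_adj hab
  have hba1 : G.dist b a = 1 := dist_adj hab.symm
  simp only [mem_Wside]
  have hma : G.dist a m = 0 ∨ G.dist m b = 0 := by omega
  rcases hma with h | h
  · have hm : a = m := hc.dist_eq_zero_iff.mp h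
    rw [← hm] at h3
    -- h3 : G.dist b a + G.dist a z = G.dist b z
    have c1 := comm' G b z
    have c2 := comm' G a z
    have c3 := comm' G b a
    left; omega
  · have hm : m = b := hc.dist_eq_zero_iff.mp h
    rw [hm] at h1
    -- h1 : G.dist z b + G.dist b a = G.dist z a
    have c3 := comm' G b a
    right; omega

lemma adj_dist_ne (hG : IsMedianGraph G) (hxy : G.Adj x y) (z : X) :
    G.dist z x ≠ G.dist z y := by
  rcases W_total hG hxy z with h | h <;> simp only [mem_Wside] at h <;> omega

lemma exists_adj_dist (hc : G.Connected) {n : ℕ} (h : G.dist x y = n + 1) :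
    ∃ z, G.Adj x z ∧ G.dist z y = n := by
  obtain ⟨p, hp⟩ := hc.exists_walk_length_eq_dist x y
  cases p with
  | nil => rw [h] at hp; simp at hp
  | @cons _ c _ hadj q =>
    refine ⟨c, hadj, ?_⟩
    have h1 : G.dist c y ≤ q.length := dist_le q
    have h2 : G.dist x y ≤ G.dist x c + G.dist c y := hc.dist_triangle
    have h3 : G.dist x c = 1 := dist_adj hadj
    simp only [Walk.length_cons] at hp
    omega

lemma align (hc : G.Connected)
    (h1 : G.dist u w + G.dist w v = G.dist u v)
    (h2 : G.dist u z + G.dist z w = G.dist u w) :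
    G.dist u z + G.dist z v = G.dist u v ∧ G.dist z w + G.dist w v = G.dist z v := by
  have t1 : G.dist z v ≤ G.dist z w + G.dist w v := hc.dist_triangle
  have t2 : G.dist u v ≤ G.dist u z + G.dist z v := hc.dist_triangle
  omega

lemma interval_subset_W (hc : G.Connected) (hab : G.Adj a b) (hu : u ∈ Wside G a b) :
    interval G u a ⊆ Wside G a b := by
  intro z hz
  simp only [mem_interval_iff] at hz
  simp only [mem_Wside] at hu ⊢
  have hab1 : G.dist a b = 1 := dist_adj hab
  have t1 : G.dist z b ≤ G.dist z a + G.dist a b := hc.dist_triangle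
  have t2 : G.dist u b ≤ G.dist u z + G.dist z b := hc.dist_triangle
  omega


lemma red (hG : IsMedianGraph G) (hab : G.Adj a b) {n : ℕ}
    (IH : ∀ m, m < n → ∀ p q : X, G.dist p q = m → p ∈ Wside G a b → q ∈ Wside G a b →
            interval G p q ⊆ Wside G a b)
    {u v w : X} (hu : u ∈ Wside G a b) (hv : v ∈ Wside G a b)
    (huv : G.dist u v = n) (hwint : G.dist u w + G.dist w v = G.dist u v)
    (hwb : w ∈ Wside G b a) :
    G.dist w v + G.dist v a = G.dist w a := by
  have hc := hG.1
  obtain ⟨m', h1, h2, h3, -⟩ := median_spec hG w v a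
  by_cases hmv : m' = v
  · rw [hmv] at h3
    have c1 := comm' G a w
    have c2 := comm' G a v
    have c3 := comm' G v w
    have c4 := comm' G w v
    omega
  · exfalso
    have hm'W : m' ∈ Wside G a b :=
      interval_subset_W hc hab hv (show m' ∈ interval G v a from h2)
    have hvm'w : G.dist v m' + G.dist m' w = G.dist v w := by
      have c1 := comm' G v m'
      have c2 := comm' G w m'
      have c3 := comm' G v w
      have c4 := comm' G w v
      omega
    have hvwu : G.dist v w + G.dist w u = G.dist v u := by
      have c1 := comm' G v w
      have c2 := comm' G w u
      have c3 := comm' G v u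
      have c4 := comm' G u w
      have c6 := comm' G u v
      omega
    obtain ⟨al1, al2⟩ := align hc hvwu hvm'w
    have hvm'pos : G.dist v m' ≠ 0 := by
      intro h0
      exact hmv (hc.dist_eq_zero_iff.mp h0).symm
    have hlt : G.dist u m' < n := by
      have c1 := comm' G u m'
      have c2 := comm' G v u
      omega
    have hwm : w ∈ interval G u m' := by
      show G.dist u w + G.dist w m' = G.dist u m'
      have c1 := comm' G w m'
      have c2 := comm' G u m'
      have c3 := comm' G m' w
      have c4 := comm' G u w
      have c5 := comm' G w u
      omega
    have := IH (G.dist u m') hlt u m' rfl hu hm'W hwm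
    simp only [mem_Wside] at this hwb
    omega

set_option maxHeartbeats 1000000 in
lemma case_two (hG : IsMedianGraph G) (hab : G.Adj a b) {u v w : X}
    (hu : G.dist u b = G.dist u a + 1) (hv : G.dist v b = G.dist v a + 1)
    (hwba : G.dist w a = G.dist w b + 1)
    (huw : G.dist u w = 1) (hwv : G.dist w v = 1)
    (huv2 : G.dist u v = 2) : False := by
  have hc := hG.1
  have hab1 : G.dist a b = 1 := dist_adj hab
  have hba1 : G.dist b a = 1 := dist_adj hab.symm
  -- distances of w, v to a, b
  have twa : G.dist w a ≤ G.dist w u + G.dist u a := hc.dist_triangle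
  have tua : G.dist u a ≤ G.dist u w + G.dist w a := hc.dist_triangle
  have tub : G.dist u b ≤ G.dist u w + G.dist w b := hc.dist_triangle
  have cwu := comm' G w u
  have hwa : G.dist w a = G.dist u a + 1 ∧ G.dist w b = G.dist u a := by omega
  have tva : G.dist v a ≤ G.dist v w + G.dist w a := hc.dist_triangle
  have twb : G.dist w b ≤ G.dist w v + G.dist v b := hc.dist_triangle
  have twa2 : G.dist w a ≤ G.dist w v + G.dist v a := hc.dist_triangle
  have tvb : G.dist v b ≤ G.dist v w + G.dist w b := hc.dist_triangle
  have cvw := comm' G v w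
  have hva : G.dist v a = G.dist u a ∧ G.dist v b = G.dist u a + 1 := by omega
  clear twa tua tub cwu tva twb twa2 tvb cvw hv
  -- z := med (u, v, a)
  obtain ⟨z, hz1, hz2, hz3, -⟩ := median_spec hG u v a
  have cz1 := comm' G u z
  have cz2 := comm' G v z
  have cz3 := comm' G a z
  have cz4 := comm' G z u
  have cz5 := comm' G a u
  have cz6 := comm' G a v
  have hzd : G.dist u z = 1 ∧ G.dist z v = 1 ∧ G.dist z a + 1 = G.dist u a := by omega
  have hzW : z ∈ Wside G a b :=
    interval_subset_W hc hab (show u ∈ Wside G a b from hu)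
      (show z ∈ interval G u a by show G.dist u z + G.dist z a = G.dist u a; omega)
  have hzb : G.dist z b = G.dist z a + 1 := hzW
  clear hz2 hz3 cz2 cz3 cz6 hzW
  have cwu2 := comm' G w u
  have cav2 := comm' G a v
  have cvz2 := comm' G v z
  have cvw2 := comm' G v w
  -- d w z = 2
  have twz1 : G.dist w a ≤ G.dist w z + G.dist z a := hc.dist_triangle
  have twz2 : G.dist w z ≤ G.dist w u + G.dist u z := hc.dist_triangle
  have hwz : G.dist w z = 2 := by omega
  -- M := med (w, z, b)
  obtain ⟨M, hM1, hM2, hM3, -⟩ := median_spec hG w z b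
  have cM1 := comm' G w M
  have cM2 := comm' G z M
  have cM3 := comm' G b M
  have cM4 := comm' G b w
  have cM5 := comm' G b z
  have hMd : G.dist w M = 1 ∧ G.dist M z = 1 ∧ G.dist M b + 1 = G.dist u a := by omega
  have hMW : M ∈ Wside G b a :=
    interval_subset_W hc hab.symm (show w ∈ Wside G b a from hwba)
      (show M ∈ interval G w b by show G.dist w M + G.dist M b = G.dist w b; omega)
  have hMa : G.dist M a = G.dist M b + 1 := hMW
  clear hM1 hM2 hM3 cM1 cM2 cM3 cM4 cM5 hMW twz1 twz2
  -- d u M = 2 and d v M = 2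
  have tuM : G.dist u M ≤ G.dist u w + G.dist w M := hc.dist_triangle
  have cuM := comm' G u M
  have cvM := comm' G v M
  have caM := comm' G a M
  have huM : G.dist u M = 2 := by
    rcases Nat.lt_or_ge (G.dist u M) 2 with hlt | hge
    · exfalso
      rcases Nat.lt_or_ge (G.dist u M) 1 with hlt0 | hge1
      · have h0 : G.dist u M = 0 := by omega
        have : u = M := hc.dist_eq_zero_iff.mp h0
        subst this; omega
      · have h1 : G.dist u M = 1 := by omega
        have hadj : G.Adj u M := adj_of_dist_one h1
        exact adj_dist_ne hG hadj a (by omega)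
    · omega
  have czM := comm' G z M
  have tvM : G.dist v M ≤ G.dist v z + G.dist z M := hc.dist_triangle
  have hvM : G.dist v M = 2 := by
    rcases Nat.lt_or_ge (G.dist v M) 2 with hlt | hge
    · exfalso
      rcases Nat.lt_or_ge (G.dist v M) 1 with hlt0 | hge1
      · have h0 : G.dist v M = 0 := by omega
        have : v = M := hc.dist_eq_zero_iff.mp h0
        subst this; omega
      · have h1 : G.dist v M = 1 := by omega
        have hadj : G.Adj v M := adj_of_dist_one h1
        exact adj_dist_ne hG hadj a (by omega)
    · omega
  -- w and z are both medians of (u, v, M)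
  obtain ⟨mm, -, -, -, hun⟩ := median_spec hG u v M
  have cwv := comm' G w v
  have cMu := comm' G M u
  have cMw := comm' G M w
  have cMz := comm' G M z
  have cMv := comm' G M v
  have hw_is : w = mm := hun w (by omega) (by omega) (by omega)
  have hz_is : z = mm := hun z (by omega) (by omega) (by omega)
  rw [← hz_is] at hw_is
  subst hw_is
  omega

set_option maxHeartbeats 1000000 in
lemma case_three (hG : IsMedianGraph G) (hab : G.Adj a b) {n : ℕ}
    (IH : ∀ m, m < n → ∀ p q : X, G.dist p q = m → p ∈ Wside G a b → q ∈ Wside G a b →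
            interval G p q ⊆ Wside G a b)
    {u v w : X} (huW : u ∈ Wside G a b) (hvW : v ∈ Wside G a b)
    (hwb : w ∈ Wside G b a)
    (hn : G.dist u v = n) (hw : G.dist u w + G.dist w v = G.dist u v)
    (h3 : 3 ≤ n) : False := by
  have hc := hG.1
  have hab1 : G.dist a b = 1 := dist_adj hab
  have hba1 : G.dist b a = 1 := dist_adj hab.symm
  have hu : G.dist u b = G.dist u a + 1 := huW
  have hv : G.dist v b = G.dist v a + 1 := hvW
  have hwba : G.dist w a = G.dist w b + 1 := hwb
  -- u ∈ I(w, a) via red with roles of u,v swapped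
  have hvu : G.dist v u = n := by have := comm' G u v; omega
  have hwvu : G.dist v w + G.dist w u = G.dist v u := by
    have c1 := comm' G v w; have c2 := comm' G w u; have c3 := comm' G u w
    have c4 := comm' G u v; omega
  have e1 : G.dist w u + G.dist u a = G.dist w a :=
    red hG hab IH hvW huW hvu hwvu hwb
  -- n0 := med (w, u, b)
  obtain ⟨n0, hn1, hn2, hn3, -⟩ := median_spec hG w u b
  have cn1 := comm' G w n0
  have cn2 := comm' G u n0
  have cn3 := comm' G b n0
  have cn4 := comm' G b w
  have cn5 := comm' G b u
  have cn6 := comm' G u w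
  have hn0d : G.dist u n0 = 1 ∧ G.dist n0 b = G.dist u a := by omega
  have hn0W : n0 ∈ Wside G b a :=
    interval_subset_W hc hab.symm hwb (show n0 ∈ interval G w b by
      show G.dist w n0 + G.dist n0 b = G.dist w b; omega)
  have hn0a : G.dist n0 a = G.dist n0 b + 1 := hn0W
  have hn0uw : G.dist u n0 + G.dist n0 w = G.dist u w := by omega
  obtain ⟨hn0uv, -⟩ := align hc hw hn0uw
  clear hn1 hn2 hn3 cn1 cn3 cn4 cn5 cn6 hn0uw e1 hwvu hvu hwba hw hwb
  -- v ∈ I(n0, a) via red applied with w := n0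
  have e2 : G.dist n0 v + G.dist v a = G.dist n0 a :=
    red hG hab IH huW hvW hn hn0uv hn0W
  have k5 : G.dist u a + 2 = G.dist u v + G.dist v a := by omega
  -- n' := med (n0, v, b)
  obtain ⟨n', hp1, hp2, hp3, -⟩ := median_spec hG n0 v b
  have cp1 := comm' G n0 n'
  have cp2 := comm' G v n'
  have cp3 := comm' G b n'
  have cp4 := comm' G b v
  have cp5 := comm' G b n0
  have hn'd : G.dist n' b = G.dist v a ∧ G.dist v n' = 1
      ∧ G.dist n0 n' + 1 = G.dist n0 v := by omega
  have hn'W : n' ∈ Wside G b a :=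
    interval_subset_W hc hab.symm hn0W (show n' ∈ interval G n0 b by
      show G.dist n0 n' + G.dist n' b = G.dist n0 b; omega)
  have hn'a : G.dist n' a = G.dist n' b + 1 := hn'W
  -- n' ∈ I(u, v) : align from the v side
  have hvn0u : G.dist v n0 + G.dist n0 u = G.dist v u := by
    have c1 := comm' G v n0; have c2 := comm' G v u; have c3 := comm' G u v; omega
  have hvn' : G.dist v n' + G.dist n' n0 = G.dist v n0 := by
    have c1 := comm' G n' n0; have c2 := comm' G v n0; omega
  obtain ⟨hvn'u, -⟩ := align hc hvn0u hvn'
  have k1 : G.dist v n' = 1 := hn'd.2.1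
  have k2 : G.dist n' a = G.dist v a + 1 := by omega
  have k3 : G.dist n' b = G.dist v a := hn'd.1
  have k4 : G.dist u n' + 1 = G.dist u v := by
    have c1 := comm' G n' u; have c2 := comm' G v u
    have c3 := comm' G u v; have c4 := comm' G u n'; omega
  clear hp1 hp2 hp3 cp1 cp2 cp3 cp4 cp5 hn0W hn'W hn'a hn'd hvn0u hvn' hvn'u
  clear e2 hn0a hn0uv hn0d
  -- R := med (u, n', a)
  obtain ⟨R, hr1, hr2, hr3, -⟩ := median_spec hG u n' a
  have cr1 := comm' G u R
  have cr2 := comm' G n' R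
  have cr3 := comm' G a R
  have cr4 := comm' G a u
  have cr5 := comm' G a n'
  have cr6 := comm' G u n'
  have hRd : G.dist R a = G.dist v a ∧ G.dist R n' = 1 := by omega
  have hRW : R ∈ Wside G a b :=
    interval_subset_W hc hab huW (show R ∈ interval G u a by
      show G.dist u R + G.dist R a = G.dist u a; omega)
  -- d v R = 2
  have hRv : R ≠ v := by
    rintro rfl
    omega
  have tvR : G.dist v R ≤ G.dist v n' + G.dist n' R := hc.dist_triangle
  have cav := comm' G a v
  have hvR : G.dist v R = 2 := by
    rcases Nat.lt_or_ge (G.dist v R) 2 with hlt | hge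
    · exfalso
      rcases Nat.lt_or_ge (G.dist v R) 1 with hlt0 | hge1
      · have h0 : G.dist v R = 0 := by omega
        exact hRv (hc.dist_eq_zero_iff.mp h0).symm
      · have h1 : G.dist v R = 1 := by omega
        have hadj : G.Adj v R := adj_of_dist_one h1
        exact adj_dist_ne hG hadj a (by omega)
    · omega
  have hfin := IH 2 (by omega) v R hvR hvW hRW
    (show n' ∈ interval G v R by show G.dist v n' + G.dist n' R = G.dist v R; omega)
  have hco : G.dist n' b = G.dist n' a + 1 := hfin
  omega

lemma W_convex_n (hG : IsMedianGraph G) (hab : G.Adj a b) :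
    ∀ n, ∀ u v : X, G.dist u v = n → u ∈ Wside G a b → v ∈ Wside G a b →
      interval G u v ⊆ Wside G a b := by
  have hc := hG.1
  intro n
  induction n using Nat.strong_induction_on with
  | _ n IH =>
    intro u v hn huW hvW w hwI
    by_contra hwn
    have hwb : w ∈ Wside G b a := (W_total hG hab w).resolve_left hwn
    have hu : G.dist u b = G.dist u a + 1 := huW
    have hv : G.dist v b = G.dist v a + 1 := hvW
    have hwba : G.dist w a = G.dist w b + 1 := hwb
    have hw : G.dist u w + G.dist w v = G.dist u v := hwI
    rcases Nat.lt_or_ge n 2 with h2 | h2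
    · have h0 : G.dist u w = 0 ∨ G.dist w v = 0 := by omega
      rcases h0 with h0 | h0
      · have : u = w := hc.dist_eq_zero_iff.mp h0
        subst this; omega
      · have : w = v := hc.dist_eq_zero_iff.mp h0
        subst this; omega
    rcases Nat.lt_or_ge n 3 with h3 | h3
    · -- n = 2 case
      have huw1 : G.dist u w = 1 ∧ G.dist w v = 1 := by
        have h0 : G.dist u w ≠ 0 := by
          intro h0
          have : u = w := hc.dist_eq_zero_iff.mp h0
          subst this; omega
        have h1 : G.dist w v ≠ 0 := by
          intro h1
          have : w = v := hc.dist_eq_zero_iff.mp h1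
          subst this; omega
        omega
      exact case_two hG hab hu hv hwba huw1.1 huw1.2 (by omega)
    · exact case_three hG hab IH huW hvW hwb hn hw h3

lemma W_compl (hG : IsMedianGraph G) (hab : G.Adj a b) :
    (Wside G a b)ᶜ = Wside G b a := by
  ext z
  have ht := W_total hG hab z
  simp only [Set.mem_compl_iff, mem_Wside] at ht ⊢
  constructor
  · intro h; rcases ht with h' | h'
    · exact absurd h' h
    · exact h'
  · intro h h'; omega

lemma W_convex (hG : IsMedianGraph G) (hab : G.Adj a b) :
    IsConvexSet G (Wside G a b) :=
  fun u hu v hv => W_convex_n hG hab (G.dist u v) u v rfl hu hv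

lemma W_halfspace (hG : IsMedianGraph G) (hab : G.Adj a b) :
    IsHalfspace G (Wside G a b) := by
  refine ⟨W_convex hG hab, ?_⟩
  rw [W_compl hG hab]
  exact W_convex hG hab.symm

lemma a_not_mem_W (hc : G.Connected) (hab : G.Adj a b) : a ∉ Wside G b a := by
  intro h
  have h1 : G.dist a a = G.dist a b + 1 := h
  have h2 : G.dist a a = 0 := SimpleGraph.dist_self
  omega

lemma b_mem_W (hab : G.Adj a b) : b ∈ Wside G b a := by
  show G.dist b a = G.dist b b + 1
  have h1 : G.dist b a = 1 := dist_adj hab.symm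
  have h2 : G.dist b b = 0 := SimpleGraph.dist_self
  omega

lemma edge_mem_boundary (hc : G.Connected) (hab : G.Adj a b) :
    (a, b) ∈ edgeBoundaryIn G (Wside G b a) :=
  ⟨hab, a_not_mem_W hc hab, b_mem_W hab⟩

lemma halfspace_eq (hG : IsMedianGraph G) {H : Set X} (hH : IsHalfspace G H)
    (hab : G.Adj a b) (haH : a ∉ H) (hbH : b ∈ H) : H = Wside G b a := by
  have hc := hG.1
  have hab1 : G.dist a b = 1 := dist_adj hab
  have hba1 : G.dist b a = 1 := dist_adj hab.symm
  ext z
  constructor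
  · intro hz
    rcases W_total hG hab z with hzab | hzba
    · exfalso
      apply haH
      have hmem : a ∈ interval G z b := by
        show G.dist z a + G.dist a b = G.dist z b
        have h' : G.dist z b = G.dist z a + 1 := hzab
        omega
      exact hH.1 z hz b hbH hmem
    · exact hzba
  · intro hz
    by_contra hzH
    have hmem : b ∈ interval G z a := by
      show G.dist z b + G.dist b a = G.dist z a
      have h' : G.dist z a = G.dist z b + 1 := hz
      omega
    exact hH.2 z hzH a haH hmem hbH

lemma no_triangle (hG : IsMedianGraph G) (h1 : G.Adj x y) (h2 : G.Adj y z)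
    (h3 : G.Adj x z) : False := by
  apply adj_dist_ne hG h2 x
  rw [dist_adj h1, dist_adj h3]

lemma square_boundary (hG : IsMedianGraph G) {H : Set X} (hH : IsHalfspace G H)
    {aa bb cc dd : X} (sq : SquareParallel G (aa, bb) (cc, dd))
    (haH : aa ∉ H) (hbH : bb ∈ H) : cc ∉ H ∧ dd ∈ H := by
  have hc := hG.1
  obtain ⟨hab, hcd, hac, hbd, had, hbc⟩ := sq
  simp only at hab hcd hac hbd had hbc
  by_cases hcH : cc ∈ H <;> by_cases hdH : dd ∈ H
  · exfalso
    apply haH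
    apply hH.1 cc hcH bb hbH
    show G.dist cc aa + G.dist aa bb = G.dist cc bb
    have h1 : G.dist cc aa = 1 := dist_adj hac.symm
    have h2 : G.dist aa bb = 1 := dist_adj hab
    have h3 : G.dist cc bb = 2 := by
      have hne : G.dist cc bb ≠ 1 := fun h =>
        no_triangle hG (adj_of_dist_one h) hbd hcd
      have hne0 : G.dist cc bb ≠ 0 := fun h =>
        hbc ((hc.dist_eq_zero_iff.mp h).symm)
      have ht : G.dist cc bb ≤ G.dist cc aa + G.dist aa bb := hc.dist_triangle
      omega
    omega
  · exfalso
    have : cc ∈ Hᶜ := by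
      apply hH.2 aa haH dd hdH
      show G.dist aa cc + G.dist cc dd = G.dist aa dd
      have h1 : G.dist aa cc = 1 := dist_adj hac
      have h2 : G.dist cc dd = 1 := dist_adj hcd
      have h3 : G.dist aa dd = 2 := by
        have hne : G.dist aa dd ≠ 1 := fun h =>
          no_triangle hG hac hcd (adj_of_dist_one h)
        have hne0 : G.dist aa dd ≠ 0 := fun h => had (hc.dist_eq_zero_iff.mp h)
        have ht : G.dist aa dd ≤ G.dist aa cc + G.dist cc dd := hc.dist_triangle
        omega
      omega
    exact this hcH
  · exact ⟨hcH, hdH⟩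
  · exfalso
    have : bb ∈ Hᶜ := by
      apply hH.2 dd hdH aa haH
      show G.dist dd bb + G.dist bb aa = G.dist dd aa
      have h1 : G.dist dd bb = 1 := dist_adj hbd.symm
      have h2 : G.dist bb aa = 1 := dist_adj hab.symm
      have h3 : G.dist dd aa = 2 := by
        have hne : G.dist dd aa ≠ 1 := fun h =>
          no_triangle hG hac hcd (adj_of_dist_one h).symm
        have hne0 : G.dist dd aa ≠ 0 := fun h =>
          had ((hc.dist_eq_zero_iff.mp h).symm)
        have ht : G.dist dd aa ≤ G.dist dd bb + G.dist bb aa := hc.dist_triangle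
        omega
      omega
    exact this hbH

set_option maxHeartbeats 1000000 in
lemma fwd (hG : IsMedianGraph G) :
    ∀ n : ℕ, ∀ e f : {p : X × X // G.Adj p.1 p.2}, ∀ H : Set X, IsHalfspace G H →
      (e : X × X) ∈ edgeBoundaryIn G H → (f : X × X) ∈ edgeBoundaryIn G H →
      G.dist (e : X × X).2 (f : X × X).2 = n →
      Relation.EqvGen
        (fun e f : {p : X × X // G.Adj p.1 p.2} =>
          SquareParallel G (e : X × X) (f : X × X)) e f := by
  have hc := hG.1
  intro n
  induction n using Nat.strong_induction_on with
  | _ n IH =>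
    rintro ⟨⟨a1, b1⟩, he⟩ ⟨⟨c1, d1⟩, hf⟩ H hH heb hfb hdist
    obtain ⟨-, haH, hbH⟩ := heb
    obtain ⟨-, hcH, hdH⟩ := hfb
    simp only at he hf haH hbH hcH hdH hdist
    rcases Nat.eq_zero_or_pos n with h0 | hpos
    · -- base case : b1 = d1 and then a1 = c1, so e = f
      subst h0
      have hbd : b1 = d1 := hc.dist_eq_zero_iff.mp hdist
      subst hbd
      obtain ⟨m, hm1, hm2, hm3, -⟩ := median_spec hG a1 c1 b1
      have hcb : G.dist c1 b1 = 1 := dist_adj hf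
      have hba : G.dist b1 a1 = 1 := dist_adj he.symm
      by_cases hmb : G.dist m b1 = 0
      · exfalso
        have hmb1 : m = b1 := hc.dist_eq_zero_iff.mp hmb
        rw [hmb1] at hm1
        have : b1 ∈ interval G a1 c1 := hm1
        exact (hH.2 a1 haH c1 hcH this) hbH
      · have cbm := comm' G b1 m
        have hmc : G.dist c1 m = 0 := by omega
        have hma : G.dist m a1 = 0 := by omega
        have h1 : c1 = m := hc.dist_eq_zero_iff.mp hmc
        have h2 : m = a1 := hc.dist_eq_zero_iff.mp hma
        have hac : a1 = c1 := (h1.trans h2).symm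
        subst hac
        exact Relation.EqvGen.refl _
    · -- inductive step
      obtain ⟨k, rfl⟩ : ∃ k, n = k + 1 := ⟨n - 1, by omega⟩
      have hHb : H = Wside G b1 a1 := halfspace_eq hG hH he haH hbH
      have hHd : H = Wside G d1 c1 := halfspace_eq hG hH hf hcH hdH
      have hc1W : c1 ∈ Wside G a1 b1 :=
        (W_total hG he c1).resolve_right (fun h => hcH (by rw [hHb]; exact h))
      have hb1W : b1 ∈ Wside G d1 c1 := by rw [← hHd]; exact hbH
      have hc1 : G.dist c1 b1 = G.dist c1 a1 + 1 := hc1W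
      have hb1 : G.dist b1 c1 = G.dist b1 d1 + 1 := hb1W
      -- neighbour of d1 towards b1
      have hd1b : G.dist d1 b1 = k + 1 := by have := comm' G b1 d1; omega
      obtain ⟨d', hdd', hd'b⟩ := exists_adj_dist hc hd1b
      have hd'H : d' ∈ H := by
        apply hH.1 d1 hdH b1 hbH
        show G.dist d1 d' + G.dist d' b1 = G.dist d1 b1
        have h1 : G.dist d1 d' = 1 := dist_adj hdd'
        omega
      -- q := med (c1, d', a1)
      obtain ⟨q, hq1, hq2, hq3, -⟩ := median_spec hG c1 d' a1
      have hcd' : G.dist c1 d' = 2 := by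
        have hne0 : G.dist c1 d' ≠ 0 := fun h =>
          hcH (by rw [hc.dist_eq_zero_iff.mp h]; exact hd'H)
        have hne1 : G.dist c1 d' ≠ 1 := fun h =>
          no_triangle hG hf hdd' (adj_of_dist_one h)
        have ht : G.dist c1 d' ≤ G.dist c1 d1 + G.dist d1 d' := hc.dist_triangle
        have h1 : G.dist c1 d1 = 1 := dist_adj hf
        have h2 : G.dist d1 d' = 1 := dist_adj hdd'
        omega
      have hqH : q ∉ H :=
        hH.2 c1 hcH a1 haH (show q ∈ interval G c1 a1 by
          show G.dist c1 q + G.dist q a1 = G.dist c1 a1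
          have c1' := comm' G a1 q
          have c2' := comm' G q c1
          have c3' := comm' G a1 c1
          omega)
      have hca : G.dist c1 a1 = k + 1 := by
        have c1' := comm' G b1 c1
        omega
      have hqc : q ≠ c1 := by
        rintro rfl
        -- hq2 : G.dist d' q + G.dist q a1 = G.dist d' a1  (with q = c1)
        have t1 : G.dist d' a1 ≤ G.dist d' b1 + G.dist b1 a1 := hc.dist_triangle
        have c1' := comm' G d' q
        have c2' := comm' G q d'
        have c3' := comm' G b1 a1
        have hba : G.dist b1 a1 = 1 := dist_adj he.symm
        omega
      have hqd : q ≠ d' := by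
        rintro rfl
        exact hqH hd'H
      have hq_dists : G.dist c1 q = 1 ∧ G.dist q d' = 1 := by
        have h0 : G.dist c1 q ≠ 0 := fun h => hqc (hc.dist_eq_zero_iff.mp h).symm
        have h1 : G.dist q d' ≠ 0 := fun h => hqd (hc.dist_eq_zero_iff.mp h)
        omega
      have hcq : G.Adj c1 q := adj_of_dist_one hq_dists.1
      have hqd' : G.Adj q d' := adj_of_dist_one hq_dists.2
      have hstep := IH k (by omega) ⟨(a1, b1), he⟩ ⟨(q, d'), hqd'⟩ H hH
        ⟨he, haH, hbH⟩ ⟨hqd', hqH, hd'H⟩ (by have := comm' G b1 d'; simpa using by omega)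
      refine Relation.EqvGen.trans _ _ _ hstep (Relation.EqvGen.rel _ _ ?_)
      show SquareParallel G (q, d') (c1, d1)
      exact ⟨hqd', hf, hcq.symm, hdd'.symm,
        fun h => hqH (by have h' : q = d1 := h; rw [h']; exact hdH),
        fun h => hcH (by have h' : d' = c1 := h; rw [← h']; exact hd'H)⟩

end MedianSq

theorem hyperplane_equiv_eq_square_eqvGen (G : SimpleGraph X) (hG : IsMedianGraph G)
    (e f : {p : X × X // G.Adj p.1 p.2}) :
    (∃ H : Set X, IsHalfspace G H ∧
        (e : X × X) ∈ edgeBoundaryIn G H ∧ (f : X × X) ∈ edgeBoundaryIn G H) ↔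
    Relation.EqvGen
      (fun e f : {p : X × X // G.Adj p.1 p.2} => SquareParallel G (e : X × X) (f : X × X))
      e f := by
  constructor
  · rintro ⟨H, hH, heb, hfb⟩
    exact MedianSq.fwd hG _ e f H hH heb hfb rfl
  · intro h
    induction h with
    | rel x y hxy =>
      obtain ⟨⟨a1, b1⟩, hx⟩ := x
      obtain ⟨⟨c1, d1⟩, hy⟩ := y
      have hx' : G.Adj a1 b1 := hx
      have hy' : G.Adj c1 d1 := hy
      have hxy' : SquareParallel G (a1, b1) (c1, d1) := hxy
      refine ⟨MedianSq.Wside G b1 a1, MedianSq.W_halfspace hG hx'.symm,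
        MedianSq.edge_mem_boundary hG.1 hx', ?_⟩
      have hsq := MedianSq.square_boundary hG (MedianSq.W_halfspace hG hx'.symm) hxy'
        (MedianSq.a_not_mem_W hG.1 hx') (MedianSq.b_mem_W hx')
      exact ⟨hy', hsq.1, hsq.2⟩
    | refl x =>
      obtain ⟨⟨a1, b1⟩, hx⟩ := x
      have hx' : G.Adj a1 b1 := hx
      exact ⟨MedianSq.Wside G b1 a1, MedianSq.W_halfspace hG hx'.symm,
        MedianSq.edge_mem_boundary hG.1 hx', MedianSq.edge_mem_boundary hG.1 hx'⟩
    | symm x y hxy ih =>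
      obtain ⟨H, h1, h2, h3⟩ := ih
      exact ⟨H, h1, h3, h2⟩
    | trans x y z hxy hyz ih1 ih2 =>
      obtain ⟨H, hH, hx, hy⟩ := ih1
      obtain ⟨H', hH', hy', hz⟩ := ih2
      obtain ⟨⟨c1, d1⟩, hyadj⟩ := y
      have hyadj' : G.Adj c1 d1 := hyadj
      have hyc : c1 ∉ H := hy.2.1
      have hyd : d1 ∈ H := hy.2.2
      have hyc' : c1 ∉ H' := hy'.2.1
      have hyd' : d1 ∈ H' := hy'.2.2
      refine ⟨H, hH, hx, ?_⟩
      have e1 := MedianSq.halfspace_eq hG hH hyadj' hyc hyd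
      have e2 := MedianSq.halfspace_eq hG hH' hyadj' hyc' hyd'
      rw [e1, ← e2]
      exact hz
end

section
/- A median graph is a tree if and only if all of its half-spaces are pairwise nested. -/
open SimpleGraph

variable {X : Type*}

section MedianTreeAux

variable {X : Type*} {G : SimpleGraph X}

private lemma mem_interval' {x y z : X} :
    z ∈ interval G x y ↔ G.dist x z + G.dist z y = G.dist x y := Iff.rfl

/-- In a connected graph, a non-trivial pair has a neighbor one step closer. -/
private lemma exists_step (hc : G.Connected) {x z : X} (h : x ≠ z) :
    ∃ x₁, G.Adj x x₁ ∧ G.dist x₁ z + 1 = G.dist x z := by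
  obtain ⟨w, hw⟩ := hc.exists_walk_length_eq_dist x z
  cases w with
  | nil => exact absurd rfl h
  | @cons _ c _ hadj q =>
    refine ⟨c, hadj, ?_⟩
    have h1 : G.dist c z ≤ q.length := SimpleGraph.dist_le q
    have h2 : G.dist x z ≤ G.dist x c + G.dist c z := hc.dist_triangle
    have h3 : G.dist x c = 1 := SimpleGraph.dist_eq_one_iff_adj.mpr hadj
    simp only [Walk.length_cons] at hw
    omega

/-- Bipartiteness-type dichotomy from existence of medians. -/
private lemma median_adj (hG : IsMedianGraph G) {a b : X} (hab : G.Adj a b) (z : X) :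
    G.dist b z = G.dist a z + 1 ∨ G.dist a z = G.dist b z + 1 := by
  obtain ⟨m, ⟨h1, h2, h3⟩, -⟩ := hG.2 a b z
  have hc := hG.1
  have hd : G.dist a b = 1 := SimpleGraph.dist_eq_one_iff_adj.mpr hab
  rw [mem_interval'] at h1 h2 h3
  have h1' : G.dist a m = 0 ∨ G.dist m b = 0 := by omega
  rcases h1' with h | h
  · have hma : m = a := (hc.dist_eq_zero_iff.mp h).symm
    subst hma
    left
    have hba : G.dist b m = 1 := by rw [SimpleGraph.dist_comm]; exact hd
    omega
  · have hmb : m = b := hc.dist_eq_zero_iff.mp h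
    subst hmb
    right
    have c1 : G.dist z m = G.dist m z := SimpleGraph.dist_comm
    have c2 : G.dist z a = G.dist a z := SimpleGraph.dist_comm
    have c3 : G.dist m a = 1 := by rw [SimpleGraph.dist_comm]; exact hd
    omega

/-- Convexity of halfspaces determined by an edge, in a median graph. -/
private lemma W_convex (hG : IsMedianGraph G) {a b : X} (hab : G.Adj a b) :
    IsConvexSet G {z | G.dist b z = G.dist a z + 1} := by
  have hc := hG.1
  have hba : G.dist b a = 1 := by
    rw [SimpleGraph.dist_comm]; exact SimpleGraph.dist_eq_one_iff_adj.mpr hab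
  suffices key : ∀ n : ℕ, ∀ x y z : X, G.dist x y = n →
      G.dist b x = G.dist a x + 1 → G.dist b y = G.dist a y + 1 →
      G.dist x z + G.dist z y = G.dist x y → G.dist b z = G.dist a z + 1 by
    intro x hx y hy z hz
    exact key (G.dist x y) x y z rfl hx hy hz
  intro n
  induction n using Nat.strong_induction_on with
  | _ n IH =>
    intro x y z hn hx hy hz
    by_contra hzW
    have hzW' : G.dist a z = G.dist b z + 1 := by
      rcases median_adj hG hab z with h | h
      · exact absurd h hzW
      · exact h
    have hzx : z ≠ x := by
      rintro rfl
      omega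
    have hzy : z ≠ y := by
      rintro rfl
      omega
    have hdxz : 0 < G.dist x z := by
      have : G.dist x z ≠ 0 := fun h0 => hzx (hc.dist_eq_zero_iff.mp h0).symm
      omega
    have hdzy : 0 < G.dist z y := by
      have : G.dist z y ≠ 0 := fun h0 => hzy (hc.dist_eq_zero_iff.mp h0)
      omega
    have hn2 : 2 ≤ n := by omega
    -- inner step: position of a bad neighbor
    have inner : ∀ x y x₁ : X, G.dist x y = n →
        G.dist b x = G.dist a x + 1 → G.dist b y = G.dist a y + 1 →
        G.Adj x x₁ → G.dist x₁ y + 1 = n → G.dist a x₁ = G.dist b x₁ + 1 →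
        G.dist a x₁ = G.dist a y + (n - 1) := by
      intro x y x₁ hxy hxW hyW hadj hx1y hx1W
      obtain ⟨m, ⟨hm1, hm2, hm3⟩, -⟩ := hG.2 a x₁ y
      rw [mem_interval'] at hm1 hm2 hm3
      have cma : G.dist m a = G.dist a m := SimpleGraph.dist_comm
      have cya : G.dist y a = G.dist a y := SimpleGraph.dist_comm
      have cym : G.dist y m = G.dist m y := SimpleGraph.dist_comm
      have t1 : G.dist b y ≤ G.dist b m + G.dist m y := hc.dist_triangle
      have t2 : G.dist b m ≤ G.dist b a + G.dist a m := hc.dist_triangle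
      have hmW : G.dist b m = G.dist a m + 1 := by omega
      have hxx1 : G.dist x x₁ = 1 := SimpleGraph.dist_eq_one_iff_adj.mpr hadj
      have t3 : G.dist x m ≤ G.dist x x₁ + G.dist x₁ m := hc.dist_triangle
      have t4 : G.dist x y ≤ G.dist x m + G.dist m y := hc.dist_triangle
      have hx1m : G.dist x m = G.dist x₁ m + 1 := by omega
      by_cases hlt : G.dist x m < n
      · exfalso
        have := IH (G.dist x m) hlt x m x₁ rfl hxW hmW (by omega)
        omega
      · have hxm : G.dist m y = 0 := by omega
        have hmy : m = y := hc.dist_eq_zero_iff.mp hxm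
        subst hmy
        have cmx1 : G.dist m x₁ = G.dist x₁ m := SimpleGraph.dist_comm
        omega
    -- construct bad neighbors on both sides
    obtain ⟨x₁, hadj1, hd1⟩ := exists_step hc (Ne.symm hzx)
    have hxx1 : G.dist x x₁ = 1 := SimpleGraph.dist_eq_one_iff_adj.mpr hadj1
    have tx1 : G.dist x₁ y ≤ G.dist x₁ z + G.dist z y := hc.dist_triangle
    have tx2 : G.dist x y ≤ G.dist x x₁ + G.dist x₁ y := hc.dist_triangle
    have hx1y : G.dist x₁ y + 1 = n := by omega
    have hx1W : G.dist a x₁ = G.dist b x₁ + 1 := by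
      rcases median_adj hG hab x₁ with h | h
      · exfalso
        have := IH (n - 1) (by omega) x₁ y z (by omega) h hy (by omega)
        omega
      · exact h
    have e1 := inner x y x₁ hn hx hy hadj1 hx1y hx1W
    obtain ⟨y₁, hadj2, hd2⟩ := exists_step hc (Ne.symm hzy)
    have hyy1 : G.dist y y₁ = 1 := SimpleGraph.dist_eq_one_iff_adj.mpr hadj2
    have cyx : G.dist y x = G.dist x y := SimpleGraph.dist_comm
    have czx : G.dist z x = G.dist x z := SimpleGraph.dist_comm
    have cy1z : G.dist y₁ z = G.dist z y₁ := SimpleGraph.dist_comm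
    have czy : G.dist z y = G.dist y z := SimpleGraph.dist_comm
    have ty1 : G.dist y₁ x ≤ G.dist y₁ z + G.dist z x := hc.dist_triangle
    have ty2 : G.dist y x ≤ G.dist y y₁ + G.dist y₁ x := hc.dist_triangle
    have hy1x : G.dist y₁ x + 1 = n := by omega
    have hy1W : G.dist a y₁ = G.dist b y₁ + 1 := by
      rcases median_adj hG hab y₁ with h | h
      · exfalso
        have cxy1 : G.dist x y₁ = G.dist y₁ x := SimpleGraph.dist_comm
        have := IH (n - 1) (by omega) x y₁ z (by omega) hx h (by omega)
        omega
      · exact h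
    have e2 := inner y x y₁ (by omega) hy hx hadj2 hy1x hy1W
    -- triangle bounds
    have ta1 : G.dist a x₁ ≤ G.dist a x + G.dist x x₁ := hc.dist_triangle
    have ta2 : G.dist a y₁ ≤ G.dist a y + G.dist y y₁ := hc.dist_triangle
    have hn2' : n = 2 := by omega
    have hsxy : G.dist a y = G.dist a x := by omega
    have hxz1 : G.dist x z = 1 := by omega
    have hzy1 : G.dist z y = 1 := by omega
    -- s := dist a x, s ≥ 1
    have tbx : G.dist b x ≤ G.dist b z + G.dist z x := hc.dist_triangle
    have taz : G.dist a z ≤ G.dist a x + G.dist x z := hc.dist_triangle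
    have hbz : G.dist b z = G.dist a x := by omega
    have haz : G.dist a z = G.dist a x + 1 := by omega
    have cxa : G.dist x a = G.dist a x := SimpleGraph.dist_comm
    have cay : G.dist a y = G.dist y a := SimpleGraph.dist_comm
    have ts : G.dist x y ≤ G.dist x a + G.dist a y := hc.dist_triangle
    have hs1 : 1 ≤ G.dist a x := by omega
    -- second median m' of (x, y, a)
    obtain ⟨m', ⟨g1, g2, g3⟩, -⟩ := hG.2 x y a
    rw [mem_interval'] at g1 g2 g3
    have cym' : G.dist y m' = G.dist m' y := SimpleGraph.dist_comm
    have cam' : G.dist m' a = G.dist a m' := SimpleGraph.dist_comm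
    have cm'x : G.dist m' x = G.dist x m' := SimpleGraph.dist_comm
    have cya' : G.dist y a = G.dist a y := SimpleGraph.dist_comm
    have hm'x : G.dist x m' = 1 := by omega
    have hm'y : G.dist m' y = 1 := by omega
    have hm'a : G.dist a m' + 1 = G.dist a x := by omega
    have tb1 : G.dist b m' ≤ G.dist b a + G.dist a m' := hc.dist_triangle
    have tb2 : G.dist b x ≤ G.dist b m' + G.dist m' x := hc.dist_triangle
    have hbm' : G.dist b m' = G.dist a x := by omega
    -- uniqueness of the median of (x, y, b) is violated
    obtain ⟨mm, -, huq⟩ := hG.2 x y b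
    have cyz : G.dist y z = G.dist z y := SimpleGraph.dist_comm
    have czb : G.dist z b = G.dist b z := SimpleGraph.dist_comm
    have cby : G.dist y b = G.dist b y := SimpleGraph.dist_comm
    have cm'b : G.dist m' b = G.dist b m' := SimpleGraph.dist_comm
    have hz_eq : z = mm := by
      apply huq
      refine ⟨?_, ?_, ?_⟩
      · show G.dist x z + G.dist z y = G.dist x y
        omega
      · show G.dist y z + G.dist z b = G.dist y b
        omega
      · show G.dist b z + G.dist z x = G.dist b x
        omega
    have hm_eq : m' = mm := by
      apply huq
      refine ⟨?_, ?_, ?_⟩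
      · show G.dist x m' + G.dist m' y = G.dist x y
        omega
      · show G.dist y m' + G.dist m' b = G.dist y b
        omega
      · show G.dist b m' + G.dist m' x = G.dist b x
        omega
    have : z = m' := hz_eq.trans hm_eq.symm
    subst this
    omega

/-- The halfspace attached to an edge of a median graph. -/
private lemma W_halfspace (hG : IsMedianGraph G) {a b : X} (hab : G.Adj a b) :
    IsHalfspace G {z | G.dist b z = G.dist a z + 1} := by
  constructor
  · exact W_convex hG hab
  · have hcompl : ({z | G.dist b z = G.dist a z + 1} : Set X)ᶜ
        = {z | G.dist a z = G.dist b z + 1} := by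
      ext z
      simp only [Set.mem_compl_iff, Set.mem_setOf_eq]
      rcases median_adj hG hab z with h | h
      · constructor
        · intro hn; exact absurd h hn
        · intro h'; omega
      · constructor
        · intro _; exact h
        · intro _; omega
    rw [hcompl]
    exact W_convex hG hab.symm

private lemma support_dist (hc : G.Connected) {x y u : X} (w : G.Walk x y)
    (hu : u ∈ w.support) : G.dist x u + G.dist u y ≤ w.length := by
  classical
  have h := w.take_spec hu
  have hl : (w.takeUntil u hu).length + (w.dropUntil u hu).length = w.length := by
    rw [← Walk.length_append, h]
  have h1 := SimpleGraph.dist_le (w.takeUntil u hu)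
  have h2 := SimpleGraph.dist_le (w.dropUntil u hu)
  omega

/-- In a tree, two points of a geodesic interval are comparable. -/
private lemma tree_cmp (ht : G.IsTree) {x y u v : X}
    (hu : G.dist x u + G.dist u y = G.dist x y)
    (hv : G.dist x v + G.dist v y = G.dist x y) :
    G.dist x v + G.dist v u = G.dist x u ∨ G.dist x u + G.dist u v = G.dist x v := by
  have hc := ht.isConnected
  obtain ⟨w1a, h1a⟩ := hc.exists_walk_length_eq_dist x u
  obtain ⟨w1b, h1b⟩ := hc.exists_walk_length_eq_dist u y
  obtain ⟨w2a, h2a⟩ := hc.exists_walk_length_eq_dist x v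
  obtain ⟨w2b, h2b⟩ := hc.exists_walk_length_eq_dist v y
  have hl1 : (w1a.append w1b).length = G.dist x y := by
    rw [Walk.length_append]; omega
  have hl2 : (w2a.append w2b).length = G.dist x y := by
    rw [Walk.length_append]; omega
  have hp1 : (w1a.append w1b).IsPath := Walk.isPath_of_length_eq_dist _ hl1
  have hp2 : (w2a.append w2b).IsPath := Walk.isPath_of_length_eq_dist _ hl2
  have hPeq : (⟨w1a.append w1b, hp1⟩ : G.Path x y) = ⟨w2a.append w2b, hp2⟩ :=
    (isAcyclic_iff_path_unique.mp ht.IsAcyclic) _ _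
  have hweq : w1a.append w1b = w2a.append w2b := congrArg Subtype.val hPeq
  have hv2 : v ∈ (w2a.append w2b).support :=
    (Walk.mem_support_append_iff _ _).mpr (Or.inr w2b.start_mem_support)
  have hv1 : v ∈ (w1a.append w1b).support := by rw [hweq]; exact hv2
  rcases (Walk.mem_support_append_iff _ _).mp hv1 with h | h
  · left
    have hb := support_dist hc w1a h
    have tr : G.dist x u ≤ G.dist x v + G.dist v u := hc.dist_triangle
    omega
  · right
    have hb := support_dist hc w1b h
    have tr1 : G.dist x v ≤ G.dist x u + G.dist u v := hc.dist_triangle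
    have tr2 : G.dist u y ≤ G.dist u v + G.dist v y := hc.dist_triangle
    omega

/-- Core four-point lemma in a median tree. -/
private lemma tree_core (hG : IsMedianGraph G) (ht : G.IsTree) {a b c d m m' : X}
    (hm1 : G.dist a m + G.dist m b = G.dist a b)
    (hm2 : G.dist b m + G.dist m c = G.dist b c)
    (hm3 : G.dist c m + G.dist m a = G.dist c a)
    (hn1 : G.dist a m' + G.dist m' b = G.dist a b)
    (hn2 : G.dist b m' + G.dist m' d = G.dist b d)
    (hn3 : G.dist d m' + G.dist m' a = G.dist d a)
    (hne : m ≠ m')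
    (hcase : G.dist a m + G.dist m m' = G.dist a m') :
    G.dist c m + G.dist m d = G.dist c d ∨ G.dist c m' + G.dist m' d = G.dist c d := by
  have hc := hG.1
  obtain ⟨β, ⟨q1, q2, q3⟩, -⟩ := hG.2 c d b
  rw [mem_interval'] at q1 q2 q3
  -- q1 : dist c β + dist β d = dist c d
  -- q2 : dist d β + dist β b = dist d b
  -- q3 : dist b β + dist β c = dist b c
  have cmm : G.dist m' m = G.dist m m' := SimpleGraph.dist_comm
  have cbm : G.dist m b = G.dist b m := SimpleGraph.dist_comm
  have cbm' : G.dist m' b = G.dist b m' := SimpleGraph.dist_comm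
  have ccm : G.dist m c = G.dist c m := SimpleGraph.dist_comm
  have cam : G.dist m a = G.dist a m := SimpleGraph.dist_comm
  have cam' : G.dist m' a = G.dist a m' := SimpleGraph.dist_comm
  have cda : G.dist d a = G.dist a d := SimpleGraph.dist_comm
  have cca : G.dist c a = G.dist a c := SimpleGraph.dist_comm
  have cdb : G.dist d b = G.dist b d := SimpleGraph.dist_comm
  have ccb : G.dist c b = G.dist b c := SimpleGraph.dist_comm
  have cβb : G.dist β b = G.dist b β := SimpleGraph.dist_comm
  have cβc : G.dist β c = G.dist c β := SimpleGraph.dist_comm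
  have cβd : G.dist β d = G.dist d β := SimpleGraph.dist_comm
  have cdm2 : G.dist d m' = G.dist m' d := SimpleGraph.dist_comm
  have cdm3 : G.dist d m = G.dist m d := SimpleGraph.dist_comm
  -- position of m' between m and b
  have hmb : G.dist m b = G.dist m m' + G.dist m' b := by omega
  -- dist c m' = dist c m + dist m m'
  have t1 : G.dist c m' ≤ G.dist c m + G.dist m m' := by
    have := hc.dist_triangle (u := c) (v := m) (w := m')
    omega
  have t2 : G.dist c b ≤ G.dist c m' + G.dist m' b := hc.dist_triangle
  have hcm' : G.dist c m' = G.dist c m + G.dist m m' := by omega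
  -- dist d m = dist d m' + dist m m'
  have t3 : G.dist d m ≤ G.dist d m' + G.dist m' m := hc.dist_triangle
  have t4 : G.dist d a ≤ G.dist d m + G.dist m a := hc.dist_triangle
  have hdm : G.dist d m = G.dist d m' + G.dist m m' := by omega
  -- compare m and β on the interval [c, b]
  have hmcb : G.dist c m + G.dist m b = G.dist c b := by omega
  have hβcb : G.dist c β + G.dist β b = G.dist c b := by omega
  rcases tree_cmp ht hmcb hβcb with h | h
  · -- β ∈ I(c, m)
    -- then compare m' and β on [d, b]
    have hβm : G.dist c β + G.dist β m = G.dist c m := h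
    have hββ : G.dist β m' = G.dist β m + G.dist m m' := by
      have u1 : G.dist β m' ≤ G.dist β m + G.dist m m' := by
        have := hc.dist_triangle (u := β) (v := m) (w := m')
        omega
      have u2 : G.dist c m' ≤ G.dist c β + G.dist β m' := hc.dist_triangle
      omega
    have hm'db : G.dist d m' + G.dist m' b = G.dist d b := by omega
    have hβdb : G.dist d β + G.dist β b = G.dist d b := by omega
    rcases tree_cmp ht hm'db hβdb with h2 | h2
    · -- β ∈ I(d, m') : contradiction, m = m'
      exfalso
      have t5 : G.dist d m ≤ G.dist d β + G.dist β m := hc.dist_triangle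
      have hmm0 : G.dist m m' = 0 := by omega
      exact hne (hc.dist_eq_zero_iff.mp hmm0)
    · -- m' ∈ I(d, β) : m' ∈ I(c, d)
      right
      have t5 : G.dist c m' ≤ G.dist c β + G.dist β m' := hc.dist_triangle
      have t6 : G.dist c d ≤ G.dist c m' + G.dist m' d := hc.dist_triangle
      have cβm' : G.dist β m' = G.dist m' β := SimpleGraph.dist_comm
      have cdm' : G.dist d m' = G.dist m' d := SimpleGraph.dist_comm
      -- h2 : dist d m' + dist m' β = dist d β
      omega
  · -- m ∈ I(c, β) : m ∈ I(c, d)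
    left
    have t5 : G.dist m d ≤ G.dist m β + G.dist β d := hc.dist_triangle
    have t6 : G.dist c d ≤ G.dist c m + G.dist m d := hc.dist_triangle
    have cβm : G.dist β m = G.dist m β := SimpleGraph.dist_comm
    omega

/-- First step of a walk between distinct endpoints. -/
private lemma exists_first {u v : X} (p : G.Walk u v) (h : u ≠ v) :
    ∃ x, G.Adj u x ∧ s(u, x) ∈ p.edges ∧ x ∈ p.support := by
  cases p with
  | nil => exact absurd rfl h
  | @cons _ c _ hadj q =>
    exact ⟨c, hadj, by simp [Walk.edges_cons], by simp [Walk.support_cons, q.start_mem_support]⟩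

private lemma exists_first_closed {v : X} (p : G.Walk v v) (h : ¬ p.Nil) :
    ∃ x, G.Adj v x ∧ x ∈ p.support := by
  cases p with
  | nil => simp at h
  | @cons _ c _ hadj q =>
    exact ⟨c, hadj, by simp [Walk.support_cons, q.start_mem_support]⟩

end MedianTreeAux

theorem median_isTree_iff_nested (G : SimpleGraph X) (hG : IsMedianGraph G) :
    G.IsTree ↔ ∀ H K : Set X, IsHalfspace G H → IsHalfspace G K → Nested H K := by
  classical
  have hc := hG.1
  constructor
  · -- tree → all halfspaces nested
    intro ht H K hH hK
    by_contra hN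
    rw [Nested] at hN
    push_neg at hN
    obtain ⟨h1, h2, h3, h4⟩ := hN
    obtain ⟨a, haH, haK⟩ := h1
    obtain ⟨b, hbH, hbK⟩ := h2
    obtain ⟨c, hcH, hcK⟩ := h3
    obtain ⟨d, hdH, hdK⟩ := h4
    obtain ⟨m, ⟨hm1, hm2, hm3⟩, -⟩ := hG.2 a b c
    obtain ⟨m', ⟨hn1, hn2, hn3⟩, -⟩ := hG.2 a b d
    -- memberships
    have hmH : m ∈ H := hH.1 a haH b hbH hm1
    have hmK : m ∈ K := hK.1 c hcK a haK hm3
    have hm'H : m' ∈ H := hH.1 a haH b hbH hn1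
    have hm'K : m' ∈ Kᶜ := hK.2 b hbK d hdK hn2
    have hne : m ≠ m' := fun h => hm'K (h ▸ hmK)
    rw [mem_interval'] at hm1 hm2 hm3 hn1 hn2 hn3
    have hmab : G.dist a m + G.dist m b = G.dist a b := hm1
    have hm'ab : G.dist a m' + G.dist m' b = G.dist a b := hn1
    rcases tree_cmp ht hmab hm'ab with hcase | hcase
    · -- m' ∈ I(a, m) : use core with c and d swapped
      have hcore := tree_core hG ht hn1 hn2 hn3 hm1 hm2 hm3 (Ne.symm hne) hcase
      rcases hcore with h | h
      · exact hH.2 d hdH c hcH (by rw [mem_interval']; exact h) hm'H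
      · exact hH.2 d hdH c hcH (by rw [mem_interval']; exact h) hmH
    · -- m ∈ I(a, m')
      have hcore := tree_core hG ht hm1 hm2 hm3 hn1 hn2 hn3 hne hcase
      rcases hcore with h | h
      · exact hH.2 c hcH d hdH (by rw [mem_interval']; exact h) hmH
      · exact hH.2 c hcH d hdH (by rw [mem_interval']; exact h) hm'H
  · -- all halfspaces nested → tree
    intro hnest
    refine ⟨hc, ?_⟩
    intro v cyc hcyc
    -- find a support vertex at maximal distance from v
    have hvsup : v ∈ cyc.support := cyc.start_mem_support
    have hfne : cyc.support.toFinset.Nonempty := ⟨v, List.mem_toFinset.mpr hvsup⟩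
    obtain ⟨u, huF, hmax⟩ := Finset.exists_max_image cyc.support.toFinset (G.dist v) hfne
    have hu : u ∈ cyc.support := List.mem_toFinset.mp huF
    have hmax' : ∀ x ∈ cyc.support, G.dist v x ≤ G.dist v u := fun x hx =>
      hmax x (List.mem_toFinset.mpr hx)
    -- the maximum is ≥ 1
    obtain ⟨u0, hadj0, hs0⟩ := exists_first_closed cyc hcyc.not_nil
    have hk1 : 1 ≤ G.dist v u := by
      have := hmax' u0 hs0
      have : G.dist v u0 = 1 := SimpleGraph.dist_eq_one_iff_adj.mpr hadj0
      omega
    have huv : u ≠ v := by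
      rintro rfl
      rw [SimpleGraph.dist_self] at hk1
      omega
    -- split the cycle at u; extract the two cycle-neighbors of u
    set t := cyc.takeUntil u hu with ht_def
    set dr := cyc.dropUntil u hu with hdr_def
    obtain ⟨p2, hadj2, he2, hs2⟩ := exists_first dr huv
    obtain ⟨p1, hadj1, he1', hs1'⟩ := exists_first t.reverse huv
    have he1 : s(u, p1) ∈ t.edges := by
      rw [Walk.edges_reverse, List.mem_reverse] at he1'
      exact he1'
    have hs1 : p1 ∈ t.support := by
      rw [Walk.support_reverse, List.mem_reverse] at hs1'
      exact hs1'
    have hp1c : p1 ∈ cyc.support := cyc.support_takeUntil_subset hu hs1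
    have hp2c : p2 ∈ cyc.support := cyc.support_dropUntil_subset hu hs2
    -- p1 ≠ p2 since the cycle has no repeated edges
    have hedges : cyc.edges = t.edges ++ dr.edges := by
      conv_lhs => rw [← cyc.take_spec hu]
      rw [Walk.edges_append]
    have hnd : (t.edges ++ dr.edges).Nodup := hedges ▸ hcyc.edges_nodup
    have hp12 : p1 ≠ p2 := by
      rintro rfl
      exact (List.disjoint_of_nodup_append hnd) he1 he2
    -- distances
    have hdp1 : G.dist v p1 + 1 = G.dist v u := by
      have hle := hmax' p1 hp1c
      rcases median_adj hG hadj1 v with h | h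
      · have c1 : G.dist p1 v = G.dist v p1 := SimpleGraph.dist_comm
        have c2 : G.dist u v = G.dist v u := SimpleGraph.dist_comm
        omega
      · have c1 : G.dist p1 v = G.dist v p1 := SimpleGraph.dist_comm
        have c2 : G.dist u v = G.dist v u := SimpleGraph.dist_comm
        omega
    have hdp2 : G.dist v p2 + 1 = G.dist v u := by
      have hle := hmax' p2 hp2c
      rcases median_adj hG hadj2 v with h | h
      · have c1 : G.dist p2 v = G.dist v p2 := SimpleGraph.dist_comm
        have c2 : G.dist u v = G.dist v u := SimpleGraph.dist_comm
        omega
      · have c1 : G.dist p2 v = G.dist v p2 := SimpleGraph.dist_comm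
        have c2 : G.dist u v = G.dist v u := SimpleGraph.dist_comm
        omega
    have hnadj12 : ¬ G.Adj p1 p2 := by
      intro hadj
      rcases median_adj hG hadj v with h | h <;>
      · have c1 : G.dist p1 v = G.dist v p1 := SimpleGraph.dist_comm
        have c2 : G.dist p2 v = G.dist v p2 := SimpleGraph.dist_comm
        omega
    have hup1 : G.dist u p1 = 1 := SimpleGraph.dist_eq_one_iff_adj.mpr hadj1
    have hup2 : G.dist u p2 = 1 := SimpleGraph.dist_eq_one_iff_adj.mpr hadj2
    have hd12 : G.dist p1 p2 = 2 := by
      have tle : G.dist p1 p2 ≤ G.dist p1 u + G.dist u p2 := hc.dist_triangle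
      have c1 : G.dist p1 u = G.dist u p1 := SimpleGraph.dist_comm
      have hne0 : G.dist p1 p2 ≠ 0 := fun h0 => hp12 (hc.dist_eq_zero_iff.mp h0)
      have hne1 : G.dist p1 p2 ≠ 1 := fun h1 =>
        hnadj12 (SimpleGraph.dist_eq_one_iff_adj.mp h1)
      omega
    -- the median of (p1, p2, v) completes the square
    obtain ⟨m, ⟨hq1, hq2, hq3⟩, -⟩ := hG.2 p1 p2 v
    rw [mem_interval'] at hq1 hq2 hq3
    have c1 : G.dist p1 v = G.dist v p1 := SimpleGraph.dist_comm
    have c2 : G.dist p2 v = G.dist v p2 := SimpleGraph.dist_comm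
    have c3 : G.dist v m = G.dist m v := SimpleGraph.dist_comm
    have c4 : G.dist m p1 = G.dist p1 m := SimpleGraph.dist_comm
    have c5 : G.dist m p2 = G.dist p2 m := SimpleGraph.dist_comm
    have hmp1 : G.dist p1 m = 1 := by omega
    have hmp2 : G.dist m p2 = 1 := by omega
    have hmv : G.dist m v + 2 = G.dist v u := by omega
    have hum : G.dist u m = 2 := by
      have tle : G.dist u m ≤ G.dist u p1 + G.dist p1 m := hc.dist_triangle
      have hne0 : G.dist u m ≠ 0 := by
        intro h0
        have heq : u = m := hc.dist_eq_zero_iff.mp h0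
        rw [← heq] at hmv
        have c6 : G.dist u v = G.dist v u := SimpleGraph.dist_comm
        omega
      have hne1 : G.dist u m ≠ 1 := by
        intro h1
        rcases median_adj hG (SimpleGraph.dist_eq_one_iff_adj.mp h1) v with h | h <;>
        · have c4 : G.dist u v = G.dist v u := SimpleGraph.dist_comm
          omega
      omega
    -- the two halfspaces from the square are not nested
    have hH := W_halfspace hG hadj1
    have hK := W_halfspace hG hadj2
    have hnested := hnest _ _ hH hK
    have huu : G.dist u u = 0 := SimpleGraph.dist_self
    have hp1p1 : G.dist p1 p1 = 0 := SimpleGraph.dist_self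
    have hp2p2 : G.dist p2 p2 = 0 := SimpleGraph.dist_self
    have cp1u : G.dist p1 u = 1 := by
      rw [SimpleGraph.dist_comm]; exact hup1
    have cp2u : G.dist p2 u = 1 := by
      rw [SimpleGraph.dist_comm]; exact hup2
    have cp1m : G.dist p1 m = 1 := hmp1
    have cp2m : G.dist p2 m = 1 := by
      rw [SimpleGraph.dist_comm]; exact hmp2
    have cp2p1 : G.dist p2 p1 = 2 := by
      rw [SimpleGraph.dist_comm]; exact hd12
    -- memberships in the corners
    have huH : u ∈ {z | G.dist p1 z = G.dist u z + 1} := by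
      simp only [Set.mem_setOf_eq]; omega
    have huK : u ∈ {z | G.dist p2 z = G.dist u z + 1} := by
      simp only [Set.mem_setOf_eq]; omega
    have hp2H : p2 ∈ {z | G.dist p1 z = G.dist u z + 1} := by
      simp only [Set.mem_setOf_eq]; omega
    have hp2K : p2 ∉ {z | G.dist p2 z = G.dist u z + 1} := by
      simp only [Set.mem_setOf_eq]; omega
    have hp1H : p1 ∉ {z | G.dist p1 z = G.dist u z + 1} := by
      simp only [Set.mem_setOf_eq]; omega
    have hp1K : p1 ∈ {z | G.dist p2 z = G.dist u z + 1} := by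
      simp only [Set.mem_setOf_eq]; omega
    have hmH' : m ∉ {z | G.dist p1 z = G.dist u z + 1} := by
      simp only [Set.mem_setOf_eq]; omega
    have hmK' : m ∉ {z | G.dist p2 z = G.dist u z + 1} := by
      simp only [Set.mem_setOf_eq]; omega
    rcases hnested with h | h | h | h
    · exact Set.eq_empty_iff_forall_notMem.mp h u ⟨huH, huK⟩
    · exact Set.eq_empty_iff_forall_notMem.mp h p2 ⟨hp2H, hp2K⟩
    · exact Set.eq_empty_iff_forall_notMem.mp h p1 ⟨hp1H, hp1K⟩
    · exact Set.eq_empty_iff_forall_notMem.mp h m ⟨hmH', hmK'⟩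
end
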